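/- Let (k̃, ñ, {S_{i,j}}) be a Matrix Tiling instance with k̃ ≥ 1. If there exists a full solution, i.e., a choice s_{i,j} ∈ S_{i,j} (no ★ entries) for all (i,j) ∈ [k̃] × [k̃] such that (s_{i,j})₁ = (s_{i,j+1})₁ for all i ∈ [k̃], j ∈ [k̃−1], and (s_{i,j})₂ = (s_{i+1,j})₂ for all i ∈ [k̃−1], j ∈ [k̃], then the associated projection game is satisfiable: some assignment satisfies all of its edges. -/

import Mathlib

/-!
A full solution `s` is itself a satisfying assignment: give `a_{i,j}` the label `s_{i,j}` and each
vertex `b` the coordinate that its two neighbours share (the first coordinate of `s_{i,j}` for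
`b_{i,j+1/2}`, the second for `b_{i+1/2,j}`). Since every `s_{i,j}` lies in `S_{i,j}`, the
projections never produce `■` or `◆`, and the row and column conditions say exactly that both
endpoints of each edge project to the label of `b`.
-/

open Finset

namespace MatrixTiling

def edges (k : ℕ) : Finset ((ℕ × ℕ) × ((ℕ × ℕ) ⊕ (ℕ × ℕ))) :=
  ((Icc 1 (k - 1) ×ˢ Icc 1 k).biUnion fun p =>
    {((p.1, p.2), Sum.inl p), ((p.1 + 1, p.2), Sum.inl p)}) ∪
  ((Icc 1 k ×ˢ Icc 1 (k - 1)).biUnion fun p =>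
    {((p.1, p.2), Sum.inr p), ((p.1, p.2 + 1), Sum.inr p)})

lemma mem_edges {k : ℕ} {e : (ℕ × ℕ) × ((ℕ × ℕ) ⊕ (ℕ × ℕ))} :
    e ∈ edges k ↔
      (∃ i j, i ∈ Icc 1 (k - 1) ∧ j ∈ Icc 1 k ∧
        (e = ((i, j), Sum.inl (i, j)) ∨ e = ((i + 1, j), Sum.inl (i, j)))) ∨
      (∃ i j, i ∈ Icc 1 k ∧ j ∈ Icc 1 (k - 1) ∧
        (e = ((i, j), Sum.inr (i, j)) ∨ e = ((i, j + 1), Sum.inr (i, j)))) := by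
  simp only [edges, mem_union, mem_biUnion, mem_product, mem_insert, mem_singleton,
    Prod.exists, and_assoc]

theorem solution_satisfies_edges {k : ℕ} {S : ℕ → ℕ → Finset (ℕ × ℕ)}
    {π : ((ℕ × ℕ) × ((ℕ × ℕ) ⊕ (ℕ × ℕ))) → (ℕ × ℕ) → (ℕ ⊕ Bool)}
    (hπ_inl : ∀ a b σ, σ ∈ S a.1 a.2 → π (a, Sum.inl b) σ = Sum.inl σ.2)
    (hπ_inr : ∀ a b σ, σ ∈ S a.1 a.2 → π (a, Sum.inr b) σ = Sum.inl σ.1)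
    {s : ℕ → ℕ → ℕ × ℕ}
    (hs : ∀ i ∈ Icc 1 k, ∀ j ∈ Icc 1 k, s i j ∈ S i j)
    (hrow : ∀ i ∈ Icc 1 k, ∀ j ∈ Icc 1 (k - 1), (s i j).1 = (s i (j + 1)).1)
    (hcol : ∀ i ∈ Icc 1 (k - 1), ∀ j ∈ Icc 1 k, (s i j).2 = (s (i + 1) j).2) :
    ∀ e ∈ edges k, π e (s e.1.1 e.1.2) =
      Sum.elim (fun b => Sum.inl (s b.1 b.2).2) (fun b => Sum.inl (s b.1 b.2).1) e.2 := by
  have hIcc : ∀ {i}, i ∈ Icc 1 (k - 1) → i ∈ Icc 1 k ∧ i + 1 ∈ Icc 1 k := by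
    intro i hi
    simp only [mem_Icc] at hi ⊢
    omega
  intro e he
  rcases mem_edges.1 he with ⟨i, j, hi, hj, rfl | rfl⟩ | ⟨i, j, hi, hj, rfl | rfl⟩
  · exact hπ_inl _ _ _ (hs i (hIcc hi).1 j hj)
  · rw [hπ_inl _ _ _ (hs (i + 1) (hIcc hi).2 j hj)]
    exact congrArg Sum.inl (hcol i hi j hj).symm
  · exact hπ_inr _ _ _ (hs i hi j (hIcc hj).1)
  · rw [hπ_inr _ _ _ (hs i hi (j + 1) (hIcc hj).2)]
    exact congrArg Sum.inl (hrow i hi j hj).symm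

end MatrixTiling

/-- Indices are 1-based; `A = ℕ × ℕ` hosts the vertices `a_{i,j}`;
`B = (ℕ × ℕ) ⊕ (ℕ × ℕ)` hosts the vertices `Sum.inl (i, j) = b_{i+1/2, j}` and
`Sum.inr (i, j) = b_{i, j+1/2}`; `Σ_A = ℕ × ℕ` hosts `[ñ] × [ñ]` and
`Σ_B = ℕ ⊕ Bool` hosts `[ñ]` plus the two extra symbols `Sum.inr true = ■`,
`Sum.inr false = ◆`. -/
theorem stmt_14 (k : ℕ)
    (S : ℕ → ℕ → Finset (ℕ × ℕ))
    (Egame : Finset ((ℕ × ℕ) × ((ℕ × ℕ) ⊕ (ℕ × ℕ))))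
    (hEgame : Egame =
      (((Finset.Icc 1 (k - 1)) ×ˢ (Finset.Icc 1 k)).biUnion fun p =>
        ({((p.1, p.2), Sum.inl p), ((p.1 + 1, p.2), Sum.inl p)} :
          Finset ((ℕ × ℕ) × ((ℕ × ℕ) ⊕ (ℕ × ℕ))))) ∪
      (((Finset.Icc 1 k) ×ˢ (Finset.Icc 1 (k - 1))).biUnion fun p =>
        ({((p.1, p.2), Sum.inr p), ((p.1, p.2 + 1), Sum.inr p)} :
          Finset ((ℕ × ℕ) × ((ℕ × ℕ) ⊕ (ℕ × ℕ))))))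
    (π : ((ℕ × ℕ) × ((ℕ × ℕ) ⊕ (ℕ × ℕ))) → (ℕ × ℕ) → (ℕ ⊕ Bool))
    (hπ : π = fun e σ =>
      match e.2 with
      | Sum.inl zt =>
          if σ ∈ S e.1.1 e.1.2 then Sum.inl σ.2
          else if zt.1 < e.1.1 then Sum.inr true else Sum.inr false
      | Sum.inr zt =>
          if σ ∈ S e.1.1 e.1.2 then Sum.inl σ.1
          else if zt.2 < e.1.2 then Sum.inr true else Sum.inr false)
    (s : ℕ → ℕ → ℕ × ℕ)
    (hs : ∀ i ∈ Finset.Icc 1 k, ∀ j ∈ Finset.Icc 1 k, s i j ∈ S i j)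
    (hrow : ∀ i ∈ Finset.Icc 1 k, ∀ j ∈ Finset.Icc 1 (k - 1),
      (s i j).1 = (s i (j + 1)).1)
    (hcol : ∀ i ∈ Finset.Icc 1 (k - 1), ∀ j ∈ Finset.Icc 1 k,
      (s i j).2 = (s (i + 1) j).2) :
    ∃ (φA : ℕ × ℕ → ℕ × ℕ) (φB : (ℕ × ℕ) ⊕ (ℕ × ℕ) → ℕ ⊕ Bool),
      ∀ e ∈ Egame, π e (φA e.1) = φB e.2 := by
  subst hEgame
  refine ⟨fun a => s a.1 a.2, _, MatrixTiling.solution_satisfies_edges ?_ ?_ hs hrow hcol⟩ <;>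
  · intro a b σ hσ
    simp only [hπ, if_pos hσ]
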